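/- Let k ≥ 1 and n ≥ 1. Then for every integer r with 0 ≤ r ≤ n-1, the number of k-Dyck paths P of down-size n whose total number of peaks (including the rightmost peak) is r + 1, i.e. with pk(P) = r where pk counts non-rightmost peaks, equals (1/n) · C(n, r+1) · C(kn, r), where C(a, b) denotes the binomial coefficient. -/

import Mathlib

/-- A step of a `k`-Dyck path: `true` is an up-step `u = (1,1)`,
`false` is a down-step `d = (1,-k)`. -/
abbrev DStep := Bool

/-- The height change produced by a step of a `k`-Dyck path. -/
def stepVal (k : ℕ) (s : DStep) : ℤ := if s then 1 else -(k : ℤ)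

/-- The height of the path `P` (with steps `u = +1`, `d = -k`) after its first `j` steps,
starting at height `start`. -/
def height (k : ℕ) (start : ℤ) (P : List DStep) (j : ℕ) : ℤ :=
  start + ((P.take j).map (stepVal k)).sum

/-- `P` is a `k`-Dyck path: it starts and ends at height `0` and never goes below `0`.
Its down-size is `P.count false`, the number of its down-steps. -/
def IsDyck (k : ℕ) (P : List DStep) : Prop :=
  (∀ j ≤ P.length, 0 ≤ height k 0 P j) ∧ height k 0 P P.length = 0

/-- The set of positions of peaks (occurrences of the factor `ud`) of `P`:
`j` is a peak position if step `j` is `u` and step `j+1` is `d`. -/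
def peakSet (P : List DStep) : Finset ℕ :=
  (Finset.range P.length).filter fun j => P.getD j false = true ∧ P.getD (j+1) true = false

/-- The number of all peaks of `P` (run starting at height `start`) whose height is
`≡ i (mod k)`; the height of a peak `ud` is the height at the vertex between `u` and `d`. -/
def pkAll (k : ℕ) (start : ℤ) (i : ℕ) (P : List DStep) : ℕ :=
  ((peakSet P).filter fun j => height k start P (j+1) % (k : ℤ) = (i : ℤ)).card

/-- `pkMod k i P` is the statistic `pk_i(P)`: the number of non-rightmost peaks of `P`
(starting at height `0`) whose height is `≡ i (mod k)`. -/
def pkMod (k : ℕ) (i : ℕ) (P : List DStep) : ℕ :=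
  ((peakSet P).filter fun j =>
    (∃ j' ∈ peakSet P, j < j') ∧ height k 0 P (j+1) % (k : ℤ) = (i : ℤ)).card

/-- The statistic `pk(P)`: the total number of non-rightmost peaks of `P`. -/
def pkNR (P : List DStep) : ℕ :=
  ((peakSet P).filter fun j => ∃ j' ∈ peakSet P, j < j').card

/-- The statistic `dd(P)`: the number of double descents (occurrences of the factor `dd`). -/
def ddCount (P : List DStep) : ℕ :=
  ((Finset.range P.length).filter fun j =>
    P.getD j true = false ∧ P.getD (j+1) true = false).card

/-- The combined statistic `(pk_0, …, pk_{k-1}, dd)`: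
for `i < k` it is `pk_i`, and for `i = k` it is `dd`. -/
def pathStat (k : ℕ) (P : List DStep) (i : Fin (k+1)) : ℕ :=
  if (i : ℕ) < k then pkMod k i P else ddCount P

/-!
A nonempty `k`-Dyck path factors uniquely as `u^x₁ d^y₁ ⋯ u^xₚ d^yₚ` with all `xᵢ, yᵢ > 0`,
and its peaks are the `p` factors `ud` inside these blocks. So the paths of down-size `n`
with `pk = r` correspond to pairs of compositions `x` of `kn` and `y` of `n` into `r + 1`
parts whose weights `xᵢ - k yᵢ` have nonnegative partial sums. Raising `x₁` by one
identifies these with the pairs `x` of `kn + 1`, `y` of `n` whose weights, which now sum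
to `1`, have positive partial sums; by the cycle lemma exactly one of the `r + 1` cyclic
rotations of any such pair of compositions is of this kind. Hence
`(r + 1) · #paths = C(kn, r) · C(n - 1, r) = (r + 1) · C(n, r + 1) · C(kn, r) / n`.
-/

open List

section Height

variable (k : ℕ)

def StaysNonneg (s : ℤ) (P : List DStep) : Prop := ∀ j ≤ P.length, 0 ≤ height k s P j

lemma height_append_of_le {s : ℤ} {X : List DStep} (Y : List DStep) {j : ℕ}
    (hj : j ≤ X.length) :
    height k s (X ++ Y) j = height k s X j := by
  simp [height, take_append, Nat.sub_eq_zero_of_le hj]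

lemma height_append_length_add (s : ℤ) (X Y : List DStep) (j : ℕ) :
    height k s (X ++ Y) (X.length + j) = height k (height k s X X.length) Y j := by
  simp [height, take_append, add_assoc, take_of_length_le]

lemma staysNonneg_append {s : ℤ} {X Y : List DStep} :
    StaysNonneg k s (X ++ Y) ↔ StaysNonneg k s X ∧ StaysNonneg k (height k s X X.length) Y := by
  refine ⟨fun h => ⟨fun j hj => ?_, fun j hj => ?_⟩, fun ⟨hX, hY⟩ j hj => ?_⟩
  · simpa [height_append_of_le k Y hj] using h j (by rw [length_append]; omega)
  · simpa [height_append_length_add] using h (X.length + j) (by rw [length_append]; omega)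
  · rcases le_or_gt j X.length with h | h
    · rw [height_append_of_le k Y h]; exact hX j h
    · obtain ⟨i, rfl⟩ := Nat.exists_eq_add_of_lt h
      rw [add_assoc, height_append_length_add]
      exact hY _ (by rw [length_append] at hj; omega)

lemma sum_map_stepVal (P : List DStep) :
    (P.map (stepVal k)).sum = P.count true - k * P.count false := by
  induction P with
  | nil => simp
  | cons b P ih => cases b <;> simp [stepVal, ih] <;> ring

lemma height_length (s : ℤ) (P : List DStep) :
    height k s P P.length = s + P.count true - k * P.count false := by
  simp only [height, take_length, sum_map_stepVal]
  ring

lemma height_replicate (s : ℤ) (b : DStep) (x j : ℕ) :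
    height k s (replicate x b) j = s + min j x * stepVal k b := by
  simp [height, take_replicate]

lemma staysNonneg_replicate_true (s : ℤ) (x : ℕ) :
    StaysNonneg k s (replicate x true) ↔ 0 ≤ s := by
  refine ⟨fun h => by simpa [height] using h 0 (Nat.zero_le _), fun h j _ => ?_⟩
  rw [height_replicate]
  simp only [Nat.cast_min, stepVal, ↓reduceIte, mul_one]
  omega

lemma staysNonneg_replicate_false (s : ℤ) (y : ℕ) :
    StaysNonneg k s (replicate y false) ↔ 0 ≤ s - k * y := by
  refine ⟨fun h => ?_, fun h j hj => ?_⟩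
  · simpa [height_replicate, stepVal, sub_eq_add_neg, mul_comm] using h y (by simp)
  · rw [height_replicate]
    have : ((min j y : ℕ) : ℤ) ≤ y := by exact_mod_cast min_le_right j y
    simp only [stepVal, Bool.false_eq_true, ↓reduceIte]
    nlinarith

end Height

section Blocks

def block (b : ℕ × ℕ) : List DStep := replicate b.1 true ++ replicate b.2 false

def blocksPath (l : List (ℕ × ℕ)) : List DStep := l.flatMap block

def weight (k : ℕ) (b : ℕ × ℕ) : ℤ := b.1 - k * b.2

@[simp] lemma blocksPath_nil : blocksPath [] = [] := rfl

@[simp] lemma blocksPath_cons (b : ℕ × ℕ) (l : List (ℕ × ℕ)) :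
    blocksPath (b :: l) = block b ++ blocksPath l := flatMap_cons

lemma count_true_blocksPath (l : List (ℕ × ℕ)) :
    (blocksPath l).count true = (l.map Prod.fst).sum := by
  induction l with
  | nil => simp
  | cons b l ih => simp [block, ih, count_replicate]

lemma count_false_blocksPath (l : List (ℕ × ℕ)) :
    (blocksPath l).count false = (l.map Prod.snd).sum := by
  induction l with
  | nil => simp
  | cons b l ih => simp [block, ih, count_replicate]

lemma sum_map_weight (k : ℕ) (l : List (ℕ × ℕ)) :
    (l.map (weight k)).sum = (l.map Prod.fst).sum - k * (l.map Prod.snd).sum := by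
  induction l with
  | nil => simp
  | cons b l ih =>
    simp only [map_cons, sum_cons, ih, weight, Nat.cast_add]
    ring

lemma height_blocksPath_length (k : ℕ) (s : ℤ) (l : List (ℕ × ℕ)) :
    height k s (blocksPath l) (blocksPath l).length = s + (l.map (weight k)).sum := by
  rw [height_length, count_true_blocksPath, count_false_blocksPath, sum_map_weight, add_sub_assoc]

lemma weight_succ_fst (k x y : ℕ) : weight k (x + 1, y) = weight k (x, y) + 1 := by
  simp only [weight, Nat.cast_add, Nat.cast_one]
  ring

lemma staysNonneg_block (k : ℕ) (s : ℤ) (b : ℕ × ℕ) :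
    StaysNonneg k s (block b) ↔ 0 ≤ s ∧ 0 ≤ s + weight k b := by
  rw [block, staysNonneg_append, staysNonneg_replicate_true, length_replicate, height_replicate,
    staysNonneg_replicate_false, weight]
  simp only [stepVal, if_true, min_self, mul_one]
  constructor <;> rintro ⟨h1, h2⟩ <;> constructor <;> linarith

lemma staysNonneg_blocksPath (k : ℕ) (s : ℤ) (l : List (ℕ × ℕ)) :
    StaysNonneg k s (blocksPath l) ↔ ∀ m, 0 ≤ s + ((l.map (weight k)).take m).sum := by
  induction l generalizing s with
  | nil => simp [StaysNonneg, height]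
  | cons b l ih =>
    have hend : height k s (block b) (block b).length = s + weight k b := by
      simpa using height_blocksPath_length k s [b]
    rw [blocksPath_cons, staysNonneg_append, staysNonneg_block, hend, ih]
    constructor
    · rintro ⟨⟨h0, -⟩, hl⟩ (_ | m)
      · simpa using h0
      · simpa [add_assoc] using hl m
    · intro h
      refine ⟨⟨by simpa using h 0, by simpa using h 1⟩, fun m => ?_⟩
      simpa [add_assoc] using h (m + 1)

end Blocks

section Peaks

lemma mem_peakSet {P : List DStep} {j : ℕ} :
    j ∈ peakSet P ↔ j < P.length ∧ P.getD j false = true ∧ P.getD (j + 1) true = false := by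
  simp [peakSet]

lemma peakSet_append {X : List DStep} (hX : X.getLast? ≠ some true) (Y : List DStep) :
    peakSet (X ++ Y) = peakSet X ∪ (peakSet Y).map (addLeftEmbedding X.length) := by
  ext j
  simp only [Finset.mem_union, Finset.mem_map, mem_peakSet, length_append, addLeftEmbedding_apply]
  rcases lt_or_ge j X.length with hj | hj
  · have hnot : ∀ i, X.length + i ≠ j := by omega
    simp only [hnot, and_false, exists_false, or_false, getD_append _ _ _ _ hj, hj,
      show j < X.length + Y.length by omega, true_and]
    rcases lt_or_eq_of_le (Nat.succ_le_of_lt hj) with hj1 | hj1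
    · rw [getD_append _ _ _ _ hj1]
    · have hlast : X.getD j false = false := by
        rw [getD_eq_getElem _ _ hj, Bool.eq_false_iff]
        intro h
        exact hX (by
          rw [getLast?_eq_getElem?, ← hj1, Nat.succ_sub_one, getElem?_eq_getElem hj, h])
      rw [hlast]; simp
  · obtain ⟨i, rfl⟩ := Nat.exists_eq_add_of_le hj
    rw [getD_append_right _ _ _ _ hj, getD_append_right _ _ _ _ (by omega)]
    simp [add_assoc]

lemma peakSet_block {b : ℕ × ℕ} (hx : 0 < b.1) (hy : 0 < b.2) :
    peakSet (block b) = {b.1 - 1} := by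
  ext j
  simp only [mem_peakSet, block, length_append, length_replicate, Finset.mem_singleton]
  constructor
  · rintro ⟨hj, hu, hd⟩
    by_contra hne
    rcases lt_or_ge j (b.1 - 1) with h | h
    · rw [getD_append _ _ _ _ (by rw [length_replicate]; omega), getD_replicate _ (by omega)] at hd
      exact absurd hd (by simp)
    · rw [getD_append_right _ _ _ _ (by rw [length_replicate]; omega),
        getD_replicate _ (by rw [length_replicate]; omega)] at hu
      exact absurd hu (by simp)
  · rintro rfl
    refine ⟨by omega, ?_, ?_⟩
    · rw [getD_append _ _ _ _ (by rw [length_replicate]; omega), getD_replicate _ (by omega)]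
    · rw [getD_append_right _ _ _ _ (by rw [length_replicate]; omega),
        getD_replicate _ (by rw [length_replicate]; omega)]

lemma getLast?_block_ne_some_true {b : ℕ × ℕ} (hy : 0 < b.2) :
    (block b).getLast? ≠ some true := by
  obtain ⟨y, hy'⟩ := Nat.exists_eq_add_of_lt hy
  simp [block, hy', replicate_succ', ← append_assoc]

lemma card_peakSet_blocksPath {l : List (ℕ × ℕ)} (hl : ∀ b ∈ l, 0 < b.1 ∧ 0 < b.2) :
    (peakSet (blocksPath l)).card = l.length := by
  induction l with
  | nil => simp [peakSet]
  | cons b l ih =>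
    obtain ⟨hx, hy⟩ := hl b mem_cons_self
    rw [blocksPath_cons, peakSet_append (getLast?_block_ne_some_true hy),
      Finset.card_union_of_disjoint,
      Finset.card_map, ih (fun c hc => hl c (mem_cons_of_mem _ hc)), peakSet_block hx hy,
      Finset.card_singleton, length_cons, add_comm]
    rw [Finset.disjoint_left]
    intro j hj hj'
    simp only [Finset.mem_map, addLeftEmbedding_apply] at hj'
    obtain ⟨i, -, rfl⟩ := hj'
    exact absurd (mem_peakSet.1 hj).1 (by omega)

lemma pkNR_eq_card_peakSet_sub_one (P : List DStep) : pkNR P = (peakSet P).card - 1 := by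
  rcases (peakSet P).eq_empty_or_nonempty with h | h
  · simp [pkNR, h]
  · have hfilter : (peakSet P).filter (fun j => ∃ j' ∈ peakSet P, j < j') =
        (peakSet P).erase ((peakSet P).max' h) := by
      ext j
      simp only [Finset.mem_filter, Finset.mem_erase]
      constructor
      · rintro ⟨hj, j', hj', hlt⟩
        exact ⟨(hlt.trans_le (Finset.le_max' _ _ hj')).ne, hj⟩
      · rintro ⟨hne, hj⟩
        exact ⟨hj, _, Finset.max'_mem _ h, lt_of_le_of_ne (Finset.le_max' _ _ hj) hne⟩
    rw [pkNR, hfilter, Finset.card_erase_of_mem (Finset.max'_mem _ h)]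

end Peaks

section Decomposition

lemma exists_eq_replicate_append {α : Type*} [DecidableEq α] (c : α) (P : List α) :
    ∃ x Q, P = replicate x c ++ Q ∧ Q.head? ≠ some c := by
  induction P with
  | nil => exact ⟨0, [], rfl, by simp⟩
  | cons a P ih =>
    by_cases ha : a = c
    · obtain ⟨x, Q, rfl, hQ⟩ := ih
      exact ⟨x + 1, Q, by simp [ha, replicate_succ], hQ⟩
    · exact ⟨0, a :: P, rfl, by simpa using ha⟩

lemma replicate_append_inj {α : Type*} {c : α} {x x' : ℕ} {Q Q' : List α}
    (hQ : Q.head? ≠ some c) (hQ' : Q'.head? ≠ some c)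
    (h : replicate x c ++ Q = replicate x' c ++ Q') : x = x' ∧ Q = Q' := by
  induction x generalizing x' with
  | zero => cases x' <;> simp_all [replicate_succ]
  | succ x ih =>
    cases x' with
    | zero => subst h; simp [replicate_succ] at hQ'
    | succ x' => simpa using ih (by simpa [replicate_succ] using h)

lemma eq_nil_of_head?_ne_true_of_ne_false {Q : List Bool} (ht : Q.head? ≠ some true)
    (hf : Q.head? ≠ some false) : Q = [] := by
  rcases Q with _ | ⟨_ | _, _⟩ <;> simp_all

variable {l l' : List (ℕ × ℕ)}

lemma head?_blocksPath_ne_some_false (hl : ∀ b ∈ l, 0 < b.1 ∧ 0 < b.2) :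
    (blocksPath l).head? ≠ some false := by
  rcases l with _ | ⟨b, l⟩
  · simp
  · simp [block, head?_append, head?_replicate, (hl b mem_cons_self).1.ne']

lemma blocksPath_injective (hl : ∀ b ∈ l, 0 < b.1 ∧ 0 < b.2)
    (hl' : ∀ b ∈ l', 0 < b.1 ∧ 0 < b.2)
    (h : blocksPath l = blocksPath l') : l = l' := by
  induction l generalizing l' with
  | nil =>
    rcases l' with _ | ⟨b', l'⟩
    · rfl
    · simp [block, (hl' b' mem_cons_self).1.ne'] at h
  | cons b l ih =>
    rcases l' with _ | ⟨b', l'⟩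
    · simp [block, (hl b mem_cons_self).1.ne'] at h
    · obtain ⟨hx, hy⟩ := hl b mem_cons_self
      obtain ⟨hx', hy'⟩ := hl' b' mem_cons_self
      have htail := fun c hc => hl c (mem_cons_of_mem b hc)
      have htail' := fun c hc => hl' c (mem_cons_of_mem b' hc)
      simp only [blocksPath_cons, block, append_assoc] at h
      obtain ⟨h1, h2⟩ := replicate_append_inj (by simp [head?_append, head?_replicate, hy.ne'])
        (by simp [head?_append, head?_replicate, hy'.ne']) h
      obtain ⟨h3, h4⟩ := replicate_append_inj (head?_blocksPath_ne_some_false htail)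
        (head?_blocksPath_ne_some_false htail') h2
      rw [Prod.ext h1 h3, ih htail htail' h4]

lemma exists_blocksPath_eq (P : List DStep) (hhead : P.head? ≠ some false)
    (hlast : P.getLast? ≠ some true) :
    ∃ l : List (ℕ × ℕ), (∀ b ∈ l, 0 < b.1 ∧ 0 < b.2) ∧ blocksPath l = P := by
  induction hP : P.length using Nat.strong_induction_on generalizing P with
  | _ N ih =>
    obtain ⟨x, Q, rfl, hQ⟩ := exists_eq_replicate_append true P
    rcases Nat.eq_zero_or_pos x with rfl | hx
    · exact ⟨[], by simp, (eq_nil_of_head?_ne_true_of_ne_false hQ (by simpa using hhead)).symm⟩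
    obtain ⟨y, R, rfl, hR⟩ := exists_eq_replicate_append false Q
    have hy : 0 < y := by
      refine Nat.pos_of_ne_zero fun hy0 => ?_
      subst hy0
      obtain rfl := eq_nil_of_head?_ne_true_of_ne_false hQ hR
      obtain ⟨x', rfl⟩ := Nat.exists_eq_add_of_lt hx
      simp [replicate_succ'] at hlast
    have hRlast : R.getLast? ≠ some true := fun h => hlast (by simp [getLast?_append, h])
    have hRlen : R.length < N := by
      simp only [length_append, length_replicate] at hP
      omega
    obtain ⟨l, hl, rfl⟩ := ih R.length hRlen R hR hRlast rfl
    refine ⟨(x, y) :: l, ?_, by simp [block]⟩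
    simpa [hx, hy] using hl

end Decomposition

section CycleLemma

def PrefixNonneg (c : List ℤ) : Prop := ∀ m, 0 ≤ (c.take m).sum

def PrefixPos (c : List ℤ) : Prop := ∀ m, 0 < m → 0 < (c.take m).sum

lemma sum_take_eq_sum_range_getD (l : List ℤ) (m : ℕ) :
    (l.take m).sum = ∑ i ∈ Finset.range m, l.getD i 0 := by
  induction m with
  | zero => simp
  | succ m ih =>
    rw [Finset.sum_range_succ, ← ih, take_add_one, sum_append, getD_eq_getElem?_getD]
    cases l[m]? <;> simp

variable {c : List ℤ}

lemma length_pos_of_sum_eq_one (hc : c.sum = 1) : 0 < c.length :=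
  length_pos_iff.2 (by rintro rfl; simp at hc)

def periodicSum (c : List ℤ) (j : ℕ) : ℤ := ∑ i ∈ Finset.range j, c.getD (i % c.length) 0

lemma periodicSum_length_add (hc : c.sum = 1) (j : ℕ) :
    periodicSum c (c.length + j) = periodicSum c j + 1 := by
  have hlen : periodicSum c c.length = 1 := by
    rw [← hc, ← take_length (l := c), sum_take_eq_sum_range_getD, take_length]
    exact Finset.sum_congr rfl fun i hi => by rw [Nat.mod_eq_of_lt (Finset.mem_range.1 hi)]
  rw [periodicSum, Finset.sum_range_add, ← periodicSum, hlen, add_comm]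
  simp [periodicSum, Nat.add_mod_left]

lemma sum_take_rotate (t : ℕ) {m : ℕ} (hm : m ≤ c.length) :
    ((c.rotate t).take m).sum = periodicSum c (t + m) - periodicSum c t := by
  rw [sum_take_eq_sum_range_getD, periodicSum, Finset.sum_range_add, ← periodicSum,
    add_sub_cancel_left]
  refine Finset.sum_congr rfl fun i hi => ?_
  have hi : i < c.length := (Finset.mem_range.1 hi).trans_le hm
  rw [getD_eq_getElem _ _ (by simpa using hi), getElem_rotate,
    getD_eq_getElem _ _ (Nat.mod_lt _ (by omega)), add_comm]

lemma prefixPos_rotate_iff (hc : c.sum = 1) (t : ℕ) :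
    PrefixPos (c.rotate t) ↔ ∀ j, t < j → periodicSum c t < periodicSum c j := by
  have hlen := length_pos_of_sum_eq_one hc
  constructor
  · intro h j
    induction j using Nat.strong_induction_on with
    | _ j ih =>
      intro hj
      rcases le_or_gt j (t + c.length) with hj' | hj'
      · have := h (j - t) (by omega)
        rwa [sum_take_rotate t (by omega), Nat.add_sub_cancel' hj.le, sub_pos] at this
      · obtain ⟨i, rfl⟩ := Nat.exists_eq_add_of_le (by omega : c.length ≤ j)
        rw [periodicSum_length_add hc]
        linarith [ih i (by omega) (by omega)]
  · intro h m hm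
    rcases le_or_gt m c.length with hm' | hm'
    · rw [sum_take_rotate t hm', sub_pos]; exact h _ (by omega)
    · rw [take_of_length_le (by rw [length_rotate]; omega), (rotate_perm c t).sum_eq, hc]
      exact one_pos

theorem cycle_lemma (hc : c.sum = 1) : ∃! t, t < c.length ∧ PrefixPos (c.rotate t) := by
  have hlen := length_pos_of_sum_eq_one hc
  have hS := periodicSum_length_add hc
  obtain ⟨t₀, ht₀, hmin⟩ := (Finset.range c.length).exists_min_image (periodicSum c)
    (Finset.nonempty_range_iff.2 hlen.ne')
  -- the good rotation starts at the last index of a period where the partial sums are minimal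
  obtain ⟨t, ht, hlast⟩ := ((Finset.range c.length).filter
    fun t => periodicSum c t ≤ periodicSum c t₀).exists_max_image id
    ⟨t₀, Finset.mem_filter.2 ⟨ht₀, le_rfl⟩⟩
  simp only [Finset.mem_filter, Finset.mem_range, id] at ht hlast
  have hle : ∀ i, periodicSum c t ≤ periodicSum c i := by
    intro i
    induction i using Nat.strong_induction_on with
    | _ i ih =>
      rcases lt_or_ge i c.length with hi | hi
      · exact ht.2.trans (hmin i (Finset.mem_range.2 hi))
      · obtain ⟨j, rfl⟩ := Nat.exists_eq_add_of_le hi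
        rw [hS]; linarith [ih j (by omega)]
  have hlt : ∀ j, t < j → periodicSum c t < periodicSum c j := by
    intro j hj
    rcases lt_or_ge j c.length with hj' | hj'
    · refine (hle j).lt_of_ne fun h => ?_
      have := hlast j ⟨hj', h ▸ ht.2⟩
      omega
    · obtain ⟨i, rfl⟩ := Nat.exists_eq_add_of_le hj'
      rw [hS]; linarith [hle i]
  refine ⟨t, ⟨ht.1, (prefixPos_rotate_iff hc t).2 hlt⟩, fun t' ⟨ht', hpos⟩ => ?_⟩
  have hlt' := (prefixPos_rotate_iff hc t').1 hpos
  by_contra hne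
  rcases lt_or_gt_of_ne hne with h | h
  · have := hlt (c.length + t') (by omega)
    rw [hS] at this; linarith [hlt' t h]
  · have := hlt' (c.length + t) (by omega)
    rw [hS] at this; linarith [hlt t' h]

end CycleLemma

section Rotation

variable {α : Type*} (w : α → ℤ) {p : ℕ} (Q : List α → Prop)

lemma eq_of_rotate_eq_of_prefixPos {g g' : List α} {i i' : ℕ} (hsum : (g.map w).sum = 1)
    (hg : PrefixPos (g.map w)) (hg' : PrefixPos (g'.map w)) (hi : i < g.length) (hii : i' ≤ i)
    (h : g.rotate i = g'.rotate i') : i = i' ∧ g = g' := by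
  have hg'eq : g' = g.rotate (i - i') := by
    rw [← rotate_eq_rotate (n := i'), rotate_rotate, Nat.sub_add_cancel hii, h]
  have hzero : i - i' = 0 := (cycle_lemma hsum).unique
    ⟨by rw [length_map]; omega, by rwa [← map_rotate, ← hg'eq]⟩
    ⟨by rw [length_map]; omega, by rwa [rotate_zero]⟩
  obtain rfl : i = i' := by omega
  exact ⟨rfl, by simpa using hg'eq.symm⟩

theorem card_prefixPos_mul_eq_card (hrot : ∀ l t, Q l → Q (l.rotate t))
    (hlen : ∀ l, Q l → l.length = p) (hsum : ∀ l, Q l → (l.map w).sum = 1) :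
    Nat.card {l // Q l ∧ PrefixPos (l.map w)} * p = Nat.card {l // Q l} := by
  let f : {l // Q l ∧ PrefixPos (l.map w)} × Fin p → {l // Q l} :=
    fun x => ⟨x.1.1.rotate x.2, hrot _ _ x.1.2.1⟩
  have hbij : f.Bijective := by
    refine ⟨fun ⟨g, i⟩ ⟨g', i'⟩ h => ?_, fun ⟨l, hQ⟩ => ?_⟩
    · have h : g.1.rotate i = g'.1.rotate i' := congrArg Subtype.val h
      rcases le_total i' i with hii | hii
      · obtain ⟨hi, hg⟩ := eq_of_rotate_eq_of_prefixPos w (hsum _ g.2.1) g.2.2 g'.2.2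
          (by rw [hlen _ g.2.1]; exact i.2) hii h
        rw [Subtype.ext hg, Fin.ext hi]
      · obtain ⟨hi, hg⟩ := eq_of_rotate_eq_of_prefixPos w (hsum _ g'.2.1) g'.2.2 g.2.2
          (by rw [hlen _ g'.2.1]; exact i'.2) hii h.symm
        rw [Subtype.ext hg, Fin.ext hi]
    · obtain ⟨t, ⟨ht, hpos⟩, -⟩ := cycle_lemma (hsum l hQ)
      rw [length_map, hlen l hQ] at ht
      refine ⟨(⟨l.rotate t, hrot _ _ hQ, by rwa [map_rotate]⟩,
        ⟨(p - t) % p, Nat.mod_lt _ (by omega)⟩), Subtype.ext ?_⟩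
      simp only [f, rotate_rotate]
      rw [← rotate_mod, hlen l hQ, Nat.add_mod_mod, Nat.add_sub_cancel' ht.le, Nat.mod_self,
        rotate_zero]
  rw [← Nat.card_eq_of_bijective f hbij, Nat.card_prod, Nat.card_eq_fintype_card (α := Fin p),
    Fintype.card_fin]

end Rotation

section Compositions

lemma CompositionAsSet.length_compositionAsSetEquiv_symm {n : ℕ} (hn : 0 < n)
    (s : Finset (Fin (n - 1))) :
    ((compositionAsSetEquiv n).symm s).length = s.card + 1 := by
  set inner := (s.map (Fin.castLEEmb (Nat.sub_le n 1))).map (Fin.succEmb n)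
  have hb : ((compositionAsSetEquiv n).symm s).boundaries =
      insert 0 (insert (Fin.last n) inner) := by
    ext i
    simp only [compositionAsSetEquiv, Equiv.coe_fn_symm_mk, Set.toFinset_ofPred,
      Finset.mem_filter, Finset.mem_univ, true_and, Finset.mem_insert, Finset.mem_map, inner,
      Fin.coe_castLEEmb, Fin.coe_succEmb, exists_prop]
    refine or_congr_right (or_congr_right ⟨?_, ?_⟩)
    · rintro ⟨j, hj, h⟩
      exact ⟨_, ⟨j, hj, rfl⟩, Fin.ext (by simp [h])⟩
    · rintro ⟨_, ⟨j, hj, rfl⟩, rfl⟩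
      exact ⟨j, hj, by simp⟩
  have h0 : (0 : Fin (n + 1)) ∉ insert (Fin.last n) inner := by
    simp [inner, Fin.ext_iff, hn.ne]
  have hlast : Fin.last n ∉ inner := by
    simp only [inner, Finset.mem_map, Fin.castLEEmb_apply, Fin.coe_succEmb, Fin.ext_iff,
      Fin.val_succ, Fin.val_castLE, Fin.val_last, not_exists, not_and, forall_exists_index]
    omega
  simp [CompositionAsSet.length, hb, Finset.card_insert_of_notMem h0,
    Finset.card_insert_of_notMem hlast, inner]

theorem Composition.card_length_eq {n : ℕ} (hn : 0 < n) (q : ℕ) :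
    Nat.card {c : Composition n // c.length = q + 1} = (n - 1).choose q := by
  let e := ((compositionEquiv n).trans (compositionAsSetEquiv n)).symm
  have he (s : Finset (Fin (n - 1))) : (e s).length = s.card + 1 := by
    rw [← CompositionAsSet.length_compositionAsSetEquiv_symm hn s,
      ← Composition.toCompositionAsSet_length]
    simp [e, compositionEquiv]
  rw [← Nat.card_congr (e.subtypeEquiv (p := fun s => s.card = q) fun s => by rw [he]; omega),
    Nat.card_eq_fintype_card, Fintype.card_finset_len, Fintype.card_fin]

end Compositions

section BlockSeq

def IsBlockSeq (p U D : ℕ) (l : List (ℕ × ℕ)) : Prop :=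
  l.length = p ∧ (∀ b ∈ l, 0 < b.1 ∧ 0 < b.2) ∧ (l.map Prod.fst).sum = U ∧
    (l.map Prod.snd).sum = D

variable {k p U D : ℕ} {l : List (ℕ × ℕ)}

lemma IsBlockSeq.rotate (hl : IsBlockSeq p U D l) (t : ℕ) : IsBlockSeq p U D (l.rotate t) := by
  obtain ⟨h1, h2, h3, h4⟩ := hl
  exact ⟨by simp [h1], fun b hb => h2 b (mem_rotate.1 hb),
    by rw [map_rotate, (rotate_perm _ t).sum_eq, h3],
    by rw [map_rotate, (rotate_perm _ t).sum_eq, h4]⟩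

def compositionPairEquiv (p U D : ℕ) :
    {l // IsBlockSeq p U D l} ≃
      {c : Composition U // c.length = p} × {c : Composition D // c.length = p} where
  toFun l := (⟨⟨l.1.map Prod.fst, fun hx => by
      obtain ⟨b, hb, rfl⟩ := mem_map.1 hx; exact (l.2.2.1 b hb).1, l.2.2.2.1⟩, by
      simp [Composition.length, l.2.1]⟩,
    ⟨⟨l.1.map Prod.snd, fun hy => by
      obtain ⟨b, hb, rfl⟩ := mem_map.1 hy; exact (l.2.2.1 b hb).2, l.2.2.2.2⟩, by
      simp [Composition.length, l.2.1]⟩)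
  invFun c := ⟨c.1.1.blocks.zip c.2.1.blocks, by
    obtain ⟨⟨a, ha⟩, ⟨b, hb⟩⟩ := c
    have hlen : a.blocks.length = b.blocks.length := by
      rw [Composition.blocks_length, Composition.blocks_length, ha, hb]
    refine ⟨by simp [hlen, hb], fun x hx => ⟨a.blocks_pos (of_mem_zip hx).1,
      b.blocks_pos (of_mem_zip hx).2⟩, ?_, ?_⟩
    · rw [map_fst_zip hlen.le, a.blocks_sum]
    · rw [map_snd_zip hlen.ge, b.blocks_sum]⟩
  left_inv l := Subtype.ext (by simpa [← unzip_fst, ← unzip_snd] using zip_unzip l.1)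
  right_inv c := by
    obtain ⟨⟨a, ha⟩, ⟨b, hb⟩⟩ := c
    have hlen : a.blocks.length = b.blocks.length := by
      rw [Composition.blocks_length, Composition.blocks_length, ha, hb]
    ext1 <;> refine Subtype.ext (Composition.ext ?_)
    · exact map_fst_zip hlen.le
    · exact map_snd_zip hlen.ge

lemma IsBlockSeq.sum_map_weight (hl : IsBlockSeq p U D l) :
    (l.map (weight k)).sum = U - k * D := by
  rw [_root_.sum_map_weight, hl.2.2.1, hl.2.2.2]

lemma card_isBlockSeq {U D : ℕ} (hU : 0 < U) (hD : 0 < D) (q : ℕ) :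
    Nat.card {l // IsBlockSeq (q + 1) U D l} = (U - 1).choose q * (D - 1).choose q := by
  rw [Nat.card_congr (compositionPairEquiv _ _ _), Nat.card_prod,
    Composition.card_length_eq hU, Composition.card_length_eq hD]

end BlockSeq

section Bump

variable {k p U D : ℕ}

lemma two_le_fst_of_weight_pos (hk : 0 < k) {b : ℕ × ℕ} (hb : 0 < b.2) (hw : 0 < weight k b) :
    2 ≤ b.1 := by
  have : (1 : ℤ) ≤ k * b.2 := by exact_mod_cast Nat.mul_pos hk hb
  unfold weight at hw; omega

lemma prefixPos_cons_add_one_iff (a : ℤ) (c : List ℤ) :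
    PrefixPos ((a + 1) :: c) ↔ PrefixNonneg (a :: c) := by
  constructor
  · rintro h (_ | m)
    · simp
    · have := h (m + 1) m.succ_pos
      simp only [take_succ_cons, sum_cons] at this ⊢
      omega
  · rintro h (_ | m) hm
    · omega
    · have := h (m + 1)
      simp only [take_succ_cons, sum_cons] at this ⊢
      omega

lemma isBlockSeq_cons_succ_iff {x y : ℕ} {t : List (ℕ × ℕ)} (hx : 0 < x) :
    IsBlockSeq p (U + 1) D ((x + 1, y) :: t) ↔ IsBlockSeq p U D ((x, y) :: t) := by
  simp only [IsBlockSeq, length_cons, mem_cons, forall_eq_or_imp, map_cons, sum_cons]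
  constructor <;> rintro ⟨h1, ⟨⟨-, hy⟩, h2⟩, h3, h4⟩ <;>
    exact ⟨h1, ⟨⟨by omega, hy⟩, h2⟩, by omega, h4⟩

def prefixNonnegEquivPrefixPos (hk : 0 < k) (hp : 0 < p) :
    {l // IsBlockSeq p U D l ∧ PrefixNonneg (l.map (weight k))} ≃
      {l // IsBlockSeq p (U + 1) D l ∧ PrefixPos (l.map (weight k))} where
  toFun l := ⟨l.1.modifyHead fun b => (b.1 + 1, b.2), by
    obtain ⟨_ | ⟨⟨x, y⟩, t⟩, hl, hnn⟩ := l
    · exact absurd hl.1 (by rw [length_nil]; omega)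
    refine ⟨(isBlockSeq_cons_succ_iff (hl.2.1 _ mem_cons_self).1).2 hl, ?_⟩
    rw [modifyHead_cons, map_cons, weight_succ_fst]
    exact (prefixPos_cons_add_one_iff _ _).2 hnn⟩
  invFun l := ⟨l.1.modifyHead fun b => (b.1 - 1, b.2), by
    obtain ⟨_ | ⟨⟨x, y⟩, t⟩, hl, hpp⟩ := l
    · exact absurd hl.1 (by rw [length_nil]; omega)
    have hx := two_le_fst_of_weight_pos hk (hl.2.1 _ mem_cons_self).2 (by simpa using hpp 1 one_pos)
    obtain ⟨x, rfl⟩ : ∃ x', x = x' + 1 + 1 := ⟨x - 2, by omega⟩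
    rw [map_cons, weight_succ_fst] at hpp
    refine ⟨(isBlockSeq_cons_succ_iff x.succ_pos).1 hl, ?_⟩
    simpa using (prefixPos_cons_add_one_iff _ _).1 hpp⟩
  left_inv l := by
    obtain ⟨_ | ⟨b, t⟩, -⟩ := l
    · rfl
    · exact Subtype.ext (by simp)
  right_inv l := by
    obtain ⟨_ | ⟨b, t⟩, ⟨-, hpos, -⟩, -⟩ := l
    · rfl
    · exact Subtype.ext (by simp [Nat.sub_add_cancel (hpos b mem_cons_self).1])

end Bump

section DyckPaths

variable {k n : ℕ} {P : List DStep}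

lemma isDyck_blocksPath_iff (l : List (ℕ × ℕ)) :
    IsDyck k (blocksPath l) ↔ PrefixNonneg (l.map (weight k)) ∧ (l.map (weight k)).sum = 0 := by
  have h := staysNonneg_blocksPath k 0 l
  simp only [zero_add] at h
  rw [IsDyck, PrefixNonneg, ← h, height_blocksPath_length, zero_add]
  rfl

lemma IsDyck.head?_ne_some_false (hk : 0 < k) (hP : IsDyck k P) : P.head? ≠ some false := by
  intro h
  obtain ⟨Q, rfl⟩ : ∃ Q, P = false :: Q := by
    rcases P with _ | ⟨a, Q⟩ <;> simp_all
  have hstep : height k 0 (false :: Q) 1 = -k := by simp [height, stepVal]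
  have := hP.1 1 (by simp)
  omega

lemma IsDyck.getLast?_ne_some_true (hP : IsDyck k P) : P.getLast? ≠ some true := by
  intro h
  obtain ⟨Q, rfl⟩ := getLast?_eq_some_iff.1 h
  have hstep (s : ℤ) : height k s [true] 1 = s + 1 := by simp [height, stepVal]
  have h1 := hP.1 Q.length (by simp)
  have h2 := hP.2
  rw [height_append_of_le k [true] le_rfl] at h1
  rw [length_append, height_append_length_add, length_singleton, hstep] at h2
  omega

noncomputable def blocksPathEquiv (hk : 0 < k) (hn : 0 < n) (r : ℕ) :
    {l // IsBlockSeq (r + 1) (k * n) n l ∧ PrefixNonneg (l.map (weight k))} ≃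
      {P : List DStep // IsDyck k P ∧ P.count false = n ∧ pkNR P = r} := by
  refine Equiv.ofBijective (fun l => ⟨blocksPath l.1, ?_⟩) ⟨fun l l' h => ?_, fun P => ?_⟩
  · obtain ⟨l, hl, hnn⟩ := l
    refine ⟨(isDyck_blocksPath_iff l).2 ⟨hnn, by rw [hl.sum_map_weight]; push_cast; ring⟩,
      by rw [count_false_blocksPath, hl.2.2.2], ?_⟩
    rw [pkNR_eq_card_peakSet_sub_one, card_peakSet_blocksPath hl.2.1, hl.1, Nat.add_sub_cancel]
  · exact Subtype.ext (blocksPath_injective l.2.1.2.1 l'.2.1.2.1 (congrArg Subtype.val h))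
  · obtain ⟨P, hP, hdown, hpk⟩ := P
    obtain ⟨l, hpos, rfl⟩ :=
      exists_blocksPath_eq P (hP.head?_ne_some_false hk) hP.getLast?_ne_some_true
    obtain ⟨hnn, hsum⟩ := (isDyck_blocksPath_iff l).1 hP
    rw [count_false_blocksPath] at hdown
    rw [pkNR_eq_card_peakSet_sub_one, card_peakSet_blocksPath hpos] at hpk
    rw [sum_map_weight, hdown] at hsum
    have hlen : l.length = r + 1 := by
      have : l ≠ [] := by rintro rfl; rw [map_nil, sum_nil] at hdown; omega
      have := length_pos_iff.2 this
      omega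
    have hup : (l.map Prod.fst).sum = k * n := by
      have : ((l.map Prod.fst).sum : ℤ) = k * n := by linarith
      exact_mod_cast this
    exact ⟨⟨l, ⟨hlen, hpos, hup, hdown⟩, hnn⟩, rfl⟩

end DyckPaths

theorem total_peaks_count_general (k n : ℕ) (hk : 1 ≤ k) (hn : 1 ≤ n) (r : ℕ) :
    (Nat.card {P : List DStep // IsDyck k P ∧ P.count false = n ∧ pkNR P = r} : ℚ) =
      (1 / n) * (Nat.choose n (r + 1) : ℚ) * (Nat.choose (k * n) r : ℚ) := by
  set N := Nat.card {P : List DStep // IsDyck k P ∧ P.count false = n ∧ pkNR P = r} with hN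
  have hcount : N * (r + 1) = (k * n).choose r * (n - 1).choose r := by
    rw [hN, ← Nat.card_congr (blocksPathEquiv hk hn r),
      Nat.card_congr (prefixNonnegEquivPrefixPos hk r.add_one_pos),
      card_prefixPos_mul_eq_card (weight k) (IsBlockSeq (r + 1) (k * n + 1) n)
        (fun l t hl => hl.rotate t) (fun l hl => hl.1)
        (fun l hl => by rw [hl.sum_map_weight]; push_cast; ring),
      card_isBlockSeq (k * n).add_one_pos hn, Nat.add_sub_cancel]
  have hchoose : n * (n - 1).choose r = n.choose (r + 1) * (r + 1) := by
    simpa [Nat.sub_add_cancel hn] using Nat.add_one_mul_choose_eq (n - 1) r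
  have hcount' : (N : ℚ) * (r + 1) = (k * n).choose r * (n - 1).choose r := by
    exact_mod_cast hcount
  have hchoose' : (n : ℚ) * (n - 1).choose r = n.choose (r + 1) * (r + 1) := by
    exact_mod_cast hchoose
  have hn' : (n : ℚ) ≠ 0 := by positivity
  field_simp
  apply mul_right_cancel₀ (show (r : ℚ) + 1 ≠ 0 by positivity)
  linear_combination (n : ℚ) * hcount' + ((k * n).choose r : ℚ) * hchoose'

/-- For `k, n ≥ 1` and `0 ≤ r ≤ n-1`, the number of `k`-Dyck paths of
down-size `n` whose total number of peaks is `r + 1`, i.e. with `pk(P) = r` where `pk`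
counts non-rightmost peaks, is `(1/n) C(n, r+1) C(kn, r)`. -/
theorem total_peaks_count (k n : ℕ) (hk : 1 ≤ k) (hn : 1 ≤ n) (r : ℕ) (hr : r ≤ n - 1) :
    (Nat.card {P : List DStep // IsDyck k P ∧ P.count false = n ∧ pkNR P = r} : ℚ) =
      (1 / n) * (Nat.choose n (r + 1) : ℚ) * (Nat.choose (k * n) r : ℚ) :=
  total_peaks_count_general k n hk hn r
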